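/- Let a = (a_j) be a tuple of m×m matrices over F and let T be an invertible m×m matrix over F such that: (i) every irreducible polynomial in K[x_1,…,x_M] (independent of ε) that is a denominator factor of T is a denominator factor of a, and (ii) every irreducible polynomial in K[x_1,…,x_M] that divides the numerator of det T (written in lowest terms) is a denominator factor of a. Then every irreducible polynomial in K[x_1,…,x_M] that is a denominator factor of the matrix T⁻¹ a_j T − T⁻¹ (∂_j T), for some j, is a denominator factor of a. In particular, if ε Ã_j = T⁻¹ a_j T − T⁻¹ (∂_j T) is a canonical form whose (Ã_j) constitute a dlog-form with letters L_1,…,L_N and nonzero constant coefficient matrices, then every letter L_l is an irreducible denominator factor of a. -/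

import Mathlib

/-!
Fix an irreducible `f ∈ K[x]` and let `R ⊆ F` be the localization of `K[x, ε]` at the prime
`(f)`: the elements of which `f` is not a denominator factor. If `f` were not a denominator
factor of `a`, then by (i) and (ii) the entries of `a`, `T` and `(det T)⁻¹` lie in `R`; so do
those of `T⁻¹ = (det T)⁻¹ adj T`, and, `R` being closed under `∂ⱼ` by the quotient rule, those
of `T⁻¹ aⱼ T - T⁻¹ ∂ⱼT`.

For a letter `L_l`, pick `j` with `∂ⱼ L_l ≠ 0` and an entry where `α_l` does not vanish. In that
entry of `ε ∑ α_l' ∂ⱼL_l' / L_l'` every summand but the `l`-th lies in the localization at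
`L_l`, while `ε α_l ∂ⱼL_l / L_l` does not: `L_l` divides neither `ε` nor `∂ⱼ L_l`, which has
lower degree in `xⱼ`.
-/

open MvPolynomial

noncomputable section

/-- The polynomial ring `K[x_1,…,x_M,ε]`; the variable `some j` is the invariant `x_j`
and `none` is the regulator `ε`. -/
abbrev PolyRing (K : Type*) [Field K] (M : ℕ) : Type _ :=
  MvPolynomial (Option (Fin M)) K

/-- `F = K(x_1,…,x_M,ε)`, the fraction field of `K[x_1,…,x_M,ε]`. -/
abbrev FF (K : Type*) [Field K] (M : ℕ) : Type _ :=
  FractionRing (PolyRing K M)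

/-- The regulator `ε` as an element of `F`. -/
def eps (K : Type*) [Field K] (M : ℕ) : FF K M :=
  algebraMap (PolyRing K M) (FF K M) (X none)

/-- The element `(∂_j L_l)/L_l` of `F`, for a letter `L l ∈ K[x_1,…,x_M]`. -/
def dlogTerm {K : Type*} [Field K] {M N : ℕ} (L : Fin N → MvPolynomial (Fin M) K)
    (j : Fin M) (l : Fin N) : FF K M :=
  algebraMap (PolyRing K M) (FF K M) (rename some (pderiv j (L l)))
    / algebraMap (PolyRing K M) (FF K M) (rename some (L l))

/-- `f` is a denominator factor of `r ∈ F`: writing `r = p/q` in lowest terms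
(`p, q` coprime polynomials), `f` divides `q`. -/
def IsDenomFactor {K : Type*} [Field K] {M : ℕ} (f : PolyRing K M) (r : FF K M) : Prop :=
  ∃ p q : PolyRing K M, q ≠ 0 ∧ IsRelPrime p q ∧
    r = algebraMap (PolyRing K M) (FF K M) p / algebraMap (PolyRing K M) (FF K M) q ∧
    f ∣ q

/-- `f` is a numerator factor of `r ∈ F`: writing `r = p/q` in lowest terms,
`f` divides `p`. -/
def IsNumerFactor {K : Type*} [Field K] {M : ℕ} (f : PolyRing K M) (r : FF K M) : Prop :=
  ∃ p q : PolyRing K M, q ≠ 0 ∧ IsRelPrime p q ∧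
    r = algebraMap (PolyRing K M) (FF K M) p / algebraMap (PolyRing K M) (FF K M) q ∧
    f ∣ p

/-- `f` is a denominator factor of a matrix over `F` if it is a denominator factor of
one of its entries. -/
def IsDenomFactorMat {K : Type*} [Field K] {M : ℕ} {m m' : ℕ} (f : PolyRing K M)
    (A : Matrix (Fin m') (Fin m) (FF K M)) : Prop :=
  ∃ i k, IsDenomFactor f (A i k)

namespace MvPolynomial

section Rename

variable {R σ τ : Type*} [CommSemiring R]

theorem rename_dvd_rename_iff {f : σ → τ} (hf : Function.Injective f)
    {p q : MvPolynomial σ R} : rename f p ∣ rename f q ↔ p ∣ q := by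
  refine ⟨fun h => ?_, map_dvd _⟩
  simpa only [killCompl_rename_app] using map_dvd (killCompl (R := R) hf) h

theorem optionEquivLeft_rename_some (p : MvPolynomial σ R) :
    optionEquivLeft R σ (rename some p) = Polynomial.C p := by
  have : ((optionEquivLeft R σ).toAlgHom.comp (rename some)) = Polynomial.CAlgHom := by
    ext i
    simp [optionEquivLeft_X_some]
  exact congrArg (fun φ : MvPolynomial σ R →ₐ[R] _ => φ p) this

theorem rename_some_dvd_X_none_iff {p : MvPolynomial σ R} :
    rename some p ∣ (X none : MvPolynomial (Option σ) R) ↔ IsUnit p := by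
  refine ⟨fun h => ?_, fun h => (h.map _).dvd⟩
  rw [← map_dvd_iff (optionEquivLeft R σ), optionEquivLeft_rename_some, optionEquivLeft_X_none,
    Polynomial.C_dvd_iff_dvd_coeff] at h
  exact isUnit_of_dvd_one (by simpa using h 1)

theorem prime_rename_some_iff {R : Type*} [CommRing R] [IsDomain R] {p : MvPolynomial σ R} :
    Prime (rename (some : σ → Option σ) p) ↔ Prime p := by
  rw [← MulEquiv.prime_iff (optionEquivLeft R σ).toMulEquiv]
  simp [optionEquivLeft_rename_some, Polynomial.prime_C_iff]

end Rename

section PDeriv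

variable {R σ : Type*} [CommSemiring R] {p : MvPolynomial σ R} {i : σ}

theorem degreeOf_pderiv_lt (h : pderiv i p ≠ 0) : degreeOf i (pderiv i p) < degreeOf i p := by
  have key : ∀ m ∈ (pderiv i p).support, m i < degreeOf i p := fun m hm => by
    rw [mem_support_iff, coeff_pderiv] at hm
    have := monomial_le_degreeOf i (mem_support_iff.mpr (left_ne_zero_of_mul hm))
    simp only [Finsupp.add_apply, Finsupp.single_eq_same] at this
    omega
  obtain ⟨m, hm⟩ := support_nonempty.mpr h
  exact (degreeOf_lt_iff ((Nat.zero_le _).trans_lt (key m hm))).mpr key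

theorem not_dvd_pderiv [NoZeroDivisors R] (h : pderiv i p ≠ 0) : ¬ p ∣ pderiv i p := by
  rintro ⟨q, hq⟩
  have hp : p ≠ 0 := by rintro rfl; simp at h
  have hq0 : q ≠ 0 := by rintro rfl; simp_all
  have := degreeOf_pderiv_lt h
  rw [hq, degreeOf_mul_eq hp hq0] at this
  omega

theorem pderiv_ne_zero_of_mem_vars [NoZeroDivisors R] [CharZero R] (h : i ∈ p.vars) :
    pderiv i p ≠ 0 := by
  classical
  obtain ⟨m, hm, hi⟩ := (mem_vars_iff_mem_support i).mp h
  have hle : Finsupp.single i 1 ≤ m := by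
    rw [Finsupp.single_le_iff]
    exact Nat.one_le_iff_ne_zero.mpr (Finsupp.mem_support_iff.mp hi)
  intro h0
  have := coeff_pderiv (i := i) p (m - Finsupp.single i 1)
  rw [h0, coeff_zero, tsub_add_cancel_of_le hle, eq_comm, mul_eq_zero] at this
  rcases this with h1 | h1
  · exact mem_support_iff.mp hm h1
  · exact absurd h1 (Nat.cast_add_one_ne_zero _)

theorem exists_pderiv_ne_zero_of_irreducible {K : Type*} [Field K] [CharZero K]
    {p : MvPolynomial σ K} (hp : Irreducible p) : ∃ i, pderiv i p ≠ 0 := by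
  obtain ⟨i, hi⟩ : p.vars.Nonempty := by
    rw [Finset.nonempty_iff_ne_empty, Ne, vars_eq_empty_iff_eq_C]
    intro hC
    rw [hC] at hp
    exact hp.not_isUnit (isUnit_iff_ne_zero.mpr (by rintro h; simp [h] at hp) |>.map C)
  exact ⟨i, pderiv_ne_zero_of_mem_vars hi⟩

end PDeriv

end MvPolynomial

theorem Subalgebra.nonsing_inv_mem_matrix {R K n : Type*} [CommRing R] [Field K] [Algebra R K]
    [Fintype n] [DecidableEq n] (S : Subalgebra R K) {A : Matrix n n K} (hA : A ∈ S.matrix)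
    (hdet : A.det⁻¹ ∈ S) : A⁻¹ ∈ S.matrix := by
  set B : Matrix n n S := fun i j => ⟨A i j, hA i j⟩
  have hB : S.val.toRingHom.mapMatrix B = A := rfl
  have hadj : A.adjugate ∈ S.matrix := by
    rw [← hB, ← RingHom.map_adjugate]
    exact fun i j => (B.adjugate i j).2
  rw [Matrix.inv_def, Ring.inverse_eq_inv']
  exact fun i j => S.mul_mem hdet (hadj i j)

namespace Localization

variable {A K : Type*} [CommRing A] [IsDomain A] [Field K] [Algebra A K] [IsFractionRing A K]

variable (K) in
abbrev atPrimeSubalgebra (P : Ideal A) [P.IsPrime] : Subalgebra A K :=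
  subalgebra.ofField K P.primeCompl P.primeCompl_le_nonZeroDivisors

variable {P : Ideal A} [P.IsPrime]

local notation "φ" => algebraMap A K

theorem mem_atPrimeSubalgebra_iff {x : K} :
    x ∈ atPrimeSubalgebra K P ↔ ∃ a s, s ∉ P ∧ x = φ a / φ s := by
  simp only [div_eq_mul_inv]
  exact ⟨fun ⟨a, s, hs, h⟩ => ⟨a, s, hs, h⟩, fun ⟨a, s, hs, h⟩ => ⟨a, s, hs, h⟩⟩

theorem div_mem_atPrimeSubalgebra (a : A) {s : A} (hs : s ∉ P) :
    φ a / φ s ∈ atPrimeSubalgebra K P :=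
  mem_atPrimeSubalgebra_iff.mpr ⟨a, s, hs, rfl⟩

theorem inv_mem_atPrimeSubalgebra {s : A} (hs : s ∉ P) : (φ s)⁻¹ ∈ atPrimeSubalgebra K P := by
  simpa using div_mem_atPrimeSubalgebra (K := K) 1 hs

theorem mem_of_div_mem_atPrimeSubalgebra {a p : A} (hp : p ∈ P) (hp0 : p ≠ 0)
    (h : φ a / φ p ∈ atPrimeSubalgebra K P) : a ∈ P := by
  obtain ⟨b, s, hs, hab⟩ := mem_atPrimeSubalgebra_iff.mp h
  have hs0 : s ≠ 0 := by rintro rfl; exact hs P.zero_mem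
  have hinj := IsFractionRing.injective A K
  rw [div_eq_div_iff ((map_ne_zero_iff _ hinj).mpr hp0) ((map_ne_zero_iff _ hinj).mpr hs0),
    ← map_mul, ← map_mul] at hab
  have : a * s ∈ P := hinj hab ▸ P.mul_mem_left b hp
  exact (‹P.IsPrime›.mem_or_mem this).resolve_right hs

theorem derivation_mem_atPrimeSubalgebra {R : Type*} [CommRing R] [Algebra R K]
    (D : Derivation R K K) (hD : ∀ a : A, D (φ a) ∈ atPrimeSubalgebra K P) {x : K}
    (hx : x ∈ atPrimeSubalgebra K P) : D x ∈ atPrimeSubalgebra K P := by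
  obtain ⟨a, s, hs, rfl⟩ := mem_atPrimeSubalgebra_iff.mp hx
  have hsinv := inv_mem_atPrimeSubalgebra (K := K) hs
  rw [Derivation.leibniz_div, smul_eq_mul, smul_eq_mul, smul_eq_mul]
  exact Subalgebra.mul_mem _ (Subalgebra.pow_mem _ hsinv 2) (Subalgebra.sub_mem _
    (Subalgebra.mul_mem _ (Subalgebra.algebraMap_mem _ s) (hD a))
    (Subalgebra.mul_mem _ (Subalgebra.algebraMap_mem _ a) (hD s)))

end Localization

theorem Subalgebra.gaugeTransform_mem_matrix {R K n : Type*} [CommRing R] [Field K]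
    [Algebra R K] [Fintype n] [DecidableEq n] (S : Subalgebra R K) {D : K → K}
    (hD : ∀ x ∈ S, D x ∈ S) {a T : Matrix n n K} (ha : a ∈ S.matrix) (hT : T ∈ S.matrix)
    (hdet : T.det⁻¹ ∈ S) : T⁻¹ * a * T - T⁻¹ * T.map D ∈ S.matrix := by
  have hTinv := S.nonsing_inv_mem_matrix hT hdet
  exact sub_mem (mul_mem (mul_mem hTinv ha) hT) (mul_mem hTinv fun i k => hD _ (hT i k))

open Localization

section DenomFactor

variable {K : Type*} [Field K] {M : ℕ} {f : PolyRing K M} [(Ideal.span {f}).IsPrime]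

theorem mem_atPrimeSubalgebra_iff_not_isDenomFactor {r : FF K M} :
    r ∈ atPrimeSubalgebra (FF K M) (Ideal.span {f}) ↔ ¬ IsDenomFactor f r := by
  constructor
  · rintro hr ⟨p, q, hq, hpq, rfl, hfq⟩
    have hfp := Ideal.mem_span_singleton.mp
      (mem_of_div_mem_atPrimeSubalgebra (Ideal.mem_span_singleton.mpr hfq) hq hr)
    exact Ideal.IsPrime.ne_top ‹_› (Ideal.span_singleton_eq_top.mpr (hpq hfp hfq))
  · intro h
    rw [← IsFractionRing.mk'_num_den' (PolyRing K M) r]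
    exact div_mem_atPrimeSubalgebra _ fun hden => h ⟨_, _, nonZeroDivisors.coe_ne_zero _,
      IsFractionRing.num_den_reduced _ r, (IsFractionRing.mk'_num_den' _ r).symm,
      Ideal.mem_span_singleton.mp hden⟩

theorem mem_matrix_iff_not_isDenomFactorMat {m : ℕ} {A : Matrix (Fin m) (Fin m) (FF K M)} :
    A ∈ (atPrimeSubalgebra (FF K M) (Ideal.span {f})).matrix ↔ ¬ IsDenomFactorMat f A := by
  simp only [IsDenomFactorMat, not_exists, ← mem_atPrimeSubalgebra_iff_not_isDenomFactor]
  exact Iff.rfl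

theorem inv_mem_atPrimeSubalgebra_of_not_isNumerFactor {r : FF K M}
    (h : ¬ IsNumerFactor f r) : r⁻¹ ∈ atPrimeSubalgebra (FF K M) (Ideal.span {f}) := by
  have hnum : IsFractionRing.num (PolyRing K M) r ∉ Ideal.span {f} := fun hnum =>
    h ⟨_, _, nonZeroDivisors.coe_ne_zero _, IsFractionRing.num_den_reduced _ r,
      (IsFractionRing.mk'_num_den' _ r).symm, Ideal.mem_span_singleton.mp hnum⟩
  rw [← IsFractionRing.mk'_num_den' (PolyRing K M) r, inv_div]
  exact div_mem_atPrimeSubalgebra _ hnum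

end DenomFactor

theorem isDenomFactor_eps_mul_sum_dlogTerm {K : Type*} [Field K] {M N : ℕ}
    {L : Fin N → MvPolynomial (Fin M) K} {l : Fin N} (hl : Irreducible (L l))
    (hdvd : ∀ l' ≠ l, ¬ L l ∣ L l') {j : Fin M} (hj : pderiv j (L l) ≠ 0) {c : Fin N → K}
    (hc : c l ≠ 0) :
    IsDenomFactor (rename some (L l))
      (eps K M * ∑ l', dlogTerm L j l' * algebraMap K (FF K M) (c l')) := by
  set g : PolyRing K M := rename some (L l)
  have hg : Prime g := prime_rename_some_iff.mpr hl.prime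
  have := (Ideal.span_singleton_prime hg.ne_zero).mpr hg
  set R := atPrimeSubalgebra (FF K M) (Ideal.span {g})
  have hconst (x : K) : algebraMap K (FF K M) x ∈ R := by
    rw [IsScalarTower.algebraMap_apply K (PolyRing K M)]
    exact R.algebraMap_mem _
  rw [← not_not (a := IsDenomFactor _ _), ← mem_atPrimeSubalgebra_iff_not_isDenomFactor]
  intro h
  have hrest : eps K M * ∑ l' ∈ Finset.univ.erase l, dlogTerm L j l' * algebraMap K _ (c l')
      ∈ R := by
    refine R.mul_mem (R.algebraMap_mem _) (R.sum_mem fun l' hl' => R.mul_mem ?_ (hconst _))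
    refine div_mem_atPrimeSubalgebra _ fun hg' => hdvd l' (Finset.ne_of_mem_erase hl') ?_
    exact (rename_dvd_rename_iff (Option.some_injective _)).mp (Ideal.mem_span_singleton.mp hg')
  have hterm : eps K M * (dlogTerm L j l * algebraMap K _ (c l)) ∈ R := by
    rw [← Finset.add_sum_erase _ _ (Finset.mem_univ l), mul_add] at h
    simpa using R.sub_mem h hrest
  have hdiv : eps K M * (dlogTerm L j l * algebraMap K _ (c l))
      = algebraMap _ _ (X none * rename some (C (c l) * pderiv j (L l))) / algebraMap _ _ g := by
    rw [eps, dlogTerm, IsScalarTower.algebraMap_apply K (PolyRing K M), map_mul, map_mul,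
      map_mul, rename_C, algebraMap_eq]
    ring
  rw [hdiv] at hterm
  have hgdvd := Ideal.mem_span_singleton.mp
    (mem_of_div_mem_atPrimeSubalgebra (Ideal.mem_span_singleton_self g) hg.ne_zero hterm)
  rcases hg.dvd_or_dvd hgdvd with hX | hd
  · exact hl.not_isUnit (rename_some_dvd_X_none_iff.mp hX)
  · rw [rename_dvd_rename_iff (Option.some_injective _),
      ((isUnit_iff_ne_zero.mpr hc).map C).dvd_mul_left] at hd
    exact not_dvd_pderiv hj hd

theorem letters_are_denominator_factors_general
    {K : Type*} [Field K] [CharZero K] {M m : ℕ}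
    -- the derivations `∂ j` of `F`, extending `∂/∂x_j` on the polynomial ring
    (der : Fin M → Derivation K (FF K M) (FF K M))
    (hder : ∀ (j : Fin M) (p : PolyRing K M),
      der j (algebraMap (PolyRing K M) (FF K M) p)
        = algebraMap (PolyRing K M) (FF K M) (pderiv (some j) p))
    (a : Fin M → Matrix (Fin m) (Fin m) (FF K M))
    (T : Matrix (Fin m) (Fin m) (FF K M))
    -- (i): ε-independent irreducible denominator factors of `T` are denominator factors of `a`
    (hi : ∀ f : MvPolynomial (Fin M) K, Irreducible f →
      IsDenomFactorMat (rename some f) T → ∃ j, IsDenomFactorMat (rename some f) (a j))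
    -- (ii): ε-independent irreducible numerator factors of `det T`
    -- are denominator factors of `a`
    (hii : ∀ f : MvPolynomial (Fin M) K, Irreducible f →
      IsNumerFactor (rename some f) T.det → ∃ j, IsDenomFactorMat (rename some f) (a j)) :
    (∀ f : MvPolynomial (Fin M) K, Irreducible f →
      (∃ j, IsDenomFactorMat (rename some f) (T⁻¹ * a j * T - T⁻¹ * T.map (der j))) →
      ∃ j, IsDenomFactorMat (rename some f) (a j)) ∧
    (∀ (N : ℕ) (L : Fin N → MvPolynomial (Fin M) K)
        (α : Fin N → Matrix (Fin m) (Fin m) K),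
      (∀ l, Irreducible (L l)) →
      (∀ l l', l ≠ l' → ¬ Associated (L l) (L l')) →
      (∀ l, α l ≠ 0) →
      (∀ j, T⁻¹ * a j * T - T⁻¹ * T.map (der j)
        = eps K M • ∑ l, dlogTerm L j l • (α l).map (algebraMap K (FF K M))) →
      ∀ l, ∃ j, IsDenomFactorMat (rename some (L l)) (a j)) := by
  have gauge (f : MvPolynomial (Fin M) K) (hf : Irreducible f)
      (hgauge : ∃ j, IsDenomFactorMat (rename some f) (T⁻¹ * a j * T - T⁻¹ * T.map (der j))) :
      ∃ j, IsDenomFactorMat (rename some f) (a j) := by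
    have hg : Prime (rename some f : PolyRing K M) := prime_rename_some_iff.mpr hf.prime
    have := (Ideal.span_singleton_prime hg.ne_zero).mpr hg
    set R := atPrimeSubalgebra (FF K M) (Ideal.span {rename some f})
    by_contra hnone
    have ha (j) : a j ∈ R.matrix := mem_matrix_iff_not_isDenomFactorMat.mpr fun h => hnone ⟨j, h⟩
    have hT : T ∈ R.matrix := mem_matrix_iff_not_isDenomFactorMat.mpr fun h => hnone (hi f hf h)
    have hdet : T.det⁻¹ ∈ R :=
      inv_mem_atPrimeSubalgebra_of_not_isNumerFactor fun h => hnone (hii f hf h)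
    obtain ⟨j, hj⟩ := hgauge
    refine mem_matrix_iff_not_isDenomFactorMat.mp (R.gaugeTransform_mem_matrix ?_ (ha j) hT hdet) hj
    exact fun x => derivation_mem_atPrimeSubalgebra _ fun p => hder j p ▸ R.algebraMap_mem _
  refine ⟨gauge, fun N L α hL hLL hα hform l => gauge (L l) (hL l) ?_⟩
  obtain ⟨j, hj⟩ := exists_pderiv_ne_zero_of_irreducible (hL l)
  obtain ⟨i, k, hik⟩ : ∃ i k, α l i k ≠ 0 := by
    by_contra! h
    exact hα l (Matrix.ext h)
  refine ⟨j, i, k, ?_⟩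
  have hdvd (l') (hl' : l' ≠ l) : ¬ L l ∣ L l' := fun h =>
    hLL l' l hl' ((hL l).associated_of_dvd (hL l') h).symm
  rw [hform j]
  simpa [Matrix.sum_apply] using
    isDenomFactor_eps_mul_sum_dlogTerm (hL l) hdvd hj (c := fun l' => α l' i k) hik

/-- If every ε-independent irreducible denominator factor of `T` and every ε-independent
irreducible numerator factor of `det T` is a denominator factor of `a`, then every
ε-independent irreducible denominator factor of `T⁻¹ aⱼ T - T⁻¹ ∂ⱼT` is a denominator factor
of `a`.  In particular, if `T⁻¹ aⱼ T - T⁻¹ ∂ⱼT = ε Ãⱼ` is a canonical form with letters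
`L_l` and nonzero constant coefficient matrices, then every letter is an irreducible
denominator factor of `a`. -/
theorem letters_are_denominator_factors
    {K : Type*} [Field K] [CharZero K] {M m : ℕ}
    -- the derivations `∂ j` of `F`, extending `∂/∂x_j` on the polynomial ring
    (der : Fin M → Derivation K (FF K M) (FF K M))
    (hder : ∀ (j : Fin M) (p : PolyRing K M),
      der j (algebraMap (PolyRing K M) (FF K M) p)
        = algebraMap (PolyRing K M) (FF K M) (pderiv (some j) p))
    (a : Fin M → Matrix (Fin m) (Fin m) (FF K M))
    (T : Matrix (Fin m) (Fin m) (FF K M)) (hT : IsUnit T.det)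
    -- (i): ε-independent irreducible denominator factors of `T` are denominator factors of `a`
    (hi : ∀ f : MvPolynomial (Fin M) K, Irreducible f →
      IsDenomFactorMat (rename some f) T → ∃ j, IsDenomFactorMat (rename some f) (a j))
    -- (ii): ε-independent irreducible numerator factors of `det T`
    -- are denominator factors of `a`
    (hii : ∀ f : MvPolynomial (Fin M) K, Irreducible f →
      IsNumerFactor (rename some f) T.det → ∃ j, IsDenomFactorMat (rename some f) (a j)) :
    (∀ f : MvPolynomial (Fin M) K, Irreducible f →
      (∃ j, IsDenomFactorMat (rename some f) (T⁻¹ * a j * T - T⁻¹ * T.map (der j))) →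
      ∃ j, IsDenomFactorMat (rename some f) (a j)) ∧
    (∀ (N : ℕ) (L : Fin N → MvPolynomial (Fin M) K)
        (α : Fin N → Matrix (Fin m) (Fin m) K),
      (∀ l, Irreducible (L l)) →
      (∀ l l', l ≠ l' → ¬ Associated (L l) (L l')) →
      (∀ l, α l ≠ 0) →
      (∀ j, T⁻¹ * a j * T - T⁻¹ * T.map (der j)
        = eps K M • ∑ l, dlogTerm L j l • (α l).map (algebraMap K (FF K M))) →
      ∀ l, ∃ j, IsDenomFactorMat (rename some (L l)) (a j)) :=
  letters_are_denominator_factors_general der hder a T hi hii
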